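/- arXiv:1707.07480 — 5 statements merged into one kernel-verified Lean document; each statement's English description precedes it below -/
import Mathlib

section
/- Let H be a finite-dimensional vector space over C with a finite increasing filtration F and a finite decreasing filtration U. Then the natural map from the direct sum over p of (U^p intersect F_p) to H is an isomorphism if and only if Gr^p_U Gr^F_q H = 0 for all p different from q. -/
/-!
Put `A p = U^p ∩ F_p`; the sum map is bijective iff the `A p` are independent and span `H`, and
the whole argument takes place in the modular lattice of subspaces. Independence forces
`U^p ∩ F_q = 0` for `q < p`, since it lies in `A p ∩ A q`; spanning gives `H = U^{p+1} + F_{q-1}`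
for `p < q`, and the modular law then splits `U^p ∩ F_q` as required. Conversely, the vanishing of
the off-diagonal graded pieces pushes `U^p ∩ F_q` towards the diagonal: for `q < p` down to `0`
(the filtrations are finite), so that by the modular law `A m` meets
`U^{m+1} + F_{m-1} ⊇ ∑_{j ≠ m} A j` trivially; for `p < q` into `∑ A r`, which therefore contains
`U^p ∩ F_q = H` for `p ≪ 0 ≪ q`.
-/

section ModularLattice

variable {α : Type*} [Lattice α] [IsModularLattice α]

theorem inf_inf_sup_eq_of_le_of_le {a b a' b' : α} (ha : a' ≤ a) (hb : b' ≤ b) :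
    a ⊓ b ⊓ (a' ⊔ b') = a' ⊓ b ⊔ a ⊓ b' :=
  calc a ⊓ b ⊓ (a' ⊔ b') = a ⊓ ((b' ⊔ a') ⊓ b) := by rw [sup_comm, inf_right_comm, inf_assoc]
    _ = (a' ⊓ b ⊔ b') ⊓ a := by rw [sup_inf_assoc_of_le a' hb, sup_comm, inf_comm]
    _ = a' ⊓ b ⊔ a ⊓ b' := by rw [sup_inf_assoc_of_le b' (inf_le_left.trans ha), inf_comm b']

end ModularLattice

namespace Bifiltration

variable {α : Type*} {F U : ℤ → α}

section Lattice

variable [Lattice α]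

theorem inf_le_sup_of_le_or_le (hF : Monotone F) (hU : Antitone U) {r a b : ℤ}
    (h : r ≤ b ∨ a ≤ r) : U r ⊓ F r ≤ U a ⊔ F b := by
  rcases h with h | h
  · exact le_sup_of_le_right (inf_le_right.trans (hF h))
  · exact le_sup_of_le_left (inf_le_left.trans (hU h))

theorem inf_eq_bot_of_lt [OrderBot α] (hF : Monotone F) (hU : Antitone U) {P Q : ℤ}
    (hUP : U P = ⊥) (hFQ : F Q = ⊥)
    (hgr : ∀ p q : ℤ, q < p → U p ⊓ F q ≤ U (p + 1) ⊓ F q ⊔ U p ⊓ F (q - 1))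
    (p q : ℤ) (hqp : q < p) : U p ⊓ F q = ⊥ := by
  by_cases hp : P ≤ p
  · exact le_bot_iff.mp (inf_le_left.trans ((hU hp).trans hUP.le))
  by_cases hq : q ≤ Q
  · exact le_bot_iff.mp (inf_le_right.trans ((hF hq).trans hFQ.le))
  have hright : U (p + 1) ⊓ F q = ⊥ := inf_eq_bot_of_lt hF hU hUP hFQ hgr (p + 1) q (by omega)
  have hbelow : U p ⊓ F (q - 1) = ⊥ := inf_eq_bot_of_lt hF hU hUP hFQ hgr p (q - 1) (by omega)
  simpa [hright, hbelow] using hgr p q hqp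
termination_by (P - p).toNat + (q - Q).toNat

end Lattice

section CompleteLattice

variable [CompleteLattice α]

theorem inf_eq_bot_of_iSupIndep (hF : Monotone F) (hU : Antitone U)
    (hind : iSupIndep fun r ↦ U r ⊓ F r) {p q : ℤ} (hqp : q < p) : U p ⊓ F q = ⊥ :=
  le_bot_iff.mp <| (le_inf (inf_le_inf_right _ (hU hqp.le)) (inf_le_inf_left _ (hF hqp.le))).trans
    (hind.pairwiseDisjoint hqp.ne).le_bot

theorem top_le_sup_of_iSup_inf_eq_top (hF : Monotone F) (hU : Antitone U)
    (htop : ⨆ r, U r ⊓ F r = ⊤) {a b : ℤ} (hab : a ≤ b + 1) : ⊤ ≤ U a ⊔ F b :=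
  htop ▸ iSup_le fun _ ↦ inf_le_sup_of_le_or_le hF hU (by omega)

theorem inf_le_sup_inf_of_ne [IsModularLattice α] (hF : Monotone F) (hU : Antitone U)
    (hind : iSupIndep fun r ↦ U r ⊓ F r) (htop : ⨆ r, U r ⊓ F r = ⊤) {p q : ℤ} (hpq : p ≠ q) :
    U p ⊓ F q ≤ U (p + 1) ⊓ F q ⊔ U p ⊓ F (q - 1) := by
  rcases hpq.lt_or_gt with h | h
  · calc U p ⊓ F q = U p ⊓ F q ⊓ (U (p + 1) ⊔ F (q - 1)) := by
          rw [top_le_iff.mp (top_le_sup_of_iSup_inf_eq_top hF hU htop (by omega)), inf_top_eq]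
      _ ≤ U (p + 1) ⊓ F q ⊔ U p ⊓ F (q - 1) :=
          (inf_inf_sup_eq_of_le_of_le (hU (by omega)) (hF (by omega))).le
  · rw [inf_eq_bot_of_iSupIndep hF hU hind h]
    exact bot_le

theorem inf_le_iSup_inf (hU : Antitone U)
    (hgr : ∀ p q : ℤ, p < q → U p ⊓ F q ≤ U (p + 1) ⊓ F q ⊔ U p ⊓ F (q - 1)) (p q : ℤ) :
    U p ⊓ F q ≤ ⨆ r, U r ⊓ F r := by
  rcases le_or_gt q p with h | h
  · exact (inf_le_inf_right _ (hU h)).trans (le_iSup (fun r ↦ U r ⊓ F r) q)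
  · exact (hgr p q h).trans (sup_le (inf_le_iSup_inf hU hgr (p + 1) q)
      (inf_le_iSup_inf hU hgr p (q - 1)))
termination_by (q - p).toNat

theorem iSup_inf_eq_top (hF : Monotone F) (hU : Antitone U) {P Q : ℤ} (hUP : U P = ⊤)
    (hFQ : F Q = ⊤) (hgr : ∀ p q : ℤ, p < q → U p ⊓ F q ≤ U (p + 1) ⊓ F q ⊔ U p ⊓ F (q - 1)) :
    ⨆ r, U r ⊓ F r = ⊤ := by
  have hUmin : U (min P Q) = ⊤ := top_le_iff.mp (hUP ▸ hU (min_le_left P Q))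
  have hFmax : F (max P Q) = ⊤ := top_le_iff.mp (hFQ ▸ hF (le_max_right P Q))
  simpa [hUmin, hFmax] using inf_le_iSup_inf hU hgr (min P Q) (max P Q)

theorem iSupIndep_inf [IsModularLattice α] (hF : Monotone F) (hU : Antitone U)
    (hbot : ∀ p q : ℤ, q < p → U p ⊓ F q = ⊥) : iSupIndep fun r ↦ U r ⊓ F r := by
  intro m
  have hrest : ⨆ j, ⨆ (_ : j ≠ m), U j ⊓ F j ≤ U (m + 1) ⊔ F (m - 1) :=
    iSup₂_le fun j hj ↦ inf_le_sup_of_le_or_le hF hU (by omega)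
  rw [disjoint_iff, ← le_bot_iff]
  calc U m ⊓ F m ⊓ ⨆ j, ⨆ (_ : j ≠ m), U j ⊓ F j
      ≤ U m ⊓ F m ⊓ (U (m + 1) ⊔ F (m - 1)) := inf_le_inf_left _ hrest
    _ = U (m + 1) ⊓ F m ⊔ U m ⊓ F (m - 1) :=
      inf_inf_sup_eq_of_le_of_le (hU (by omega)) (hF (by omega))
    _ = ⊥ := by rw [hbot _ _ (by omega), hbot _ _ (by omega), sup_bot_eq]

end CompleteLattice

end Bifiltration

theorem opposite_iff_bigraded_vanish_general
    (H : Type*) [AddCommGroup H] [Module ℂ H]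
    (F U : ℤ → Submodule ℂ H)
    (hF : Monotone F) (hFbot : ∃ n : ℤ, F n = ⊥) (hFtop : ∃ n : ℤ, F n = ⊤)
    (hU : Antitone U) (hUtop : ∃ n : ℤ, U n = ⊤) (hUbot : ∃ n : ℤ, U n = ⊥) :
    Function.Bijective
        (DirectSum.toModule ℂ ℤ H (fun p : ℤ => (U p ⊓ F p).subtype))
      ↔ ∀ p q : ℤ, p ≠ q → U p ⊓ F q ≤ (U (p + 1) ⊓ F q) ⊔ (U p ⊓ F (q - 1)) := by
  refine (DirectSum.isInternal_submodule_iff_iSupIndep_and_iSup_eq_top fun p ↦ U p ⊓ F p).trans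
    ⟨fun ⟨hind, htop⟩ _ _ hpq ↦ Bifiltration.inf_le_sup_inf_of_ne hF hU hind htop hpq,
      fun hgr ↦ ?_⟩
  obtain ⟨P, hUP⟩ := hUbot
  obtain ⟨Q, hFQ⟩ := hFbot
  obtain ⟨P', hUP'⟩ := hUtop
  obtain ⟨Q', hFQ'⟩ := hFtop
  have hbot := Bifiltration.inf_eq_bot_of_lt hF hU hUP hFQ fun p q h ↦ hgr p q h.ne'
  exact ⟨Bifiltration.iSupIndep_inf hF hU hbot,
    Bifiltration.iSup_inf_eq_top hF hU hUP' hFQ' fun p q h ↦ hgr p q h.ne⟩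

/-- For a finite-dimensional complex vector space `H` with a finite increasing filtration `F`
and a finite decreasing filtration `U`, the sum map `⊕_p (U^p ∩ F_p) → H` is an isomorphism
iff `Gr^p_U Gr^F_q H = 0` for all `p ≠ q` (expressed as
`U^p ∩ F_q ⊆ (U^{p+1} ∩ F_q) + (U^p ∩ F_{q-1})`). -/
theorem opposite_iff_bigraded_vanish
    (H : Type*) [AddCommGroup H] [Module ℂ H] [FiniteDimensional ℂ H]
    (F U : ℤ → Submodule ℂ H)
    (hF : Monotone F) (hFbot : ∃ n : ℤ, F n = ⊥) (hFtop : ∃ n : ℤ, F n = ⊤)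
    (hU : Antitone U) (hUtop : ∃ n : ℤ, U n = ⊤) (hUbot : ∃ n : ℤ, U n = ⊥) :
    Function.Bijective
        (DirectSum.toModule ℂ ℤ H (fun p : ℤ => (U p ⊓ F p).subtype))
      ↔ ∀ p q : ℤ, p ≠ q → U p ⊓ F q ≤ (U (p + 1) ⊓ F q) ⊔ (U p ⊓ F (q - 1)) :=
  opposite_iff_bigraded_vanish_general H F U hF hFbot hFtop hU hUtop hUbot
end

section
/- Let H be a finite-dimensional complex vector space with a finite increasing filtration F and a finite decreasing filtration U. Then the natural sum map ⊕_p (U^p H ∩ F_p H) → H is an isomorphism if and only if for every integer p, the subspaces F_p H and U^{p+1} H are complementary, i.e., F_p H ⊕ U^{p+1} H = H. -/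
/-!
Write `I p = U p ⊓ F p`; the sum map is bijective iff the `I p` are independent and span.
If they are, `F p ⊓ U (p + 1)` lies in both `I p` and `I (p + 1)`, so it is `⊥`, and every `I q`
lies in `F p` (for `q ≤ p`) or in `U (p + 1)` (for `q > p`), so `F p ⊔ U (p + 1) = ⊤`.
Conversely, all `I q` with `q ≠ p` lie in `F (p - 1) ⊔ U (p + 1)`, which meets `I p` trivially by
the modular law, and the modular law also gives `F (p + 1) = F p ⊔ I (p + 1)`, so by induction
from a step where `F` vanishes the `I q` span. Only the modular lattice structure is involved.
-/

section

variable {α : Type*} [CompleteLattice α] {F U : ℤ → α}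

theorem disjoint_of_iSupIndep_inf (hF : Monotone F) (hU : Antitone U)
    (hind : iSupIndep fun p => U p ⊓ F p) (p : ℤ) : Disjoint (F p) (U (p + 1)) := by
  have hp : F p ⊓ U (p + 1) ≤ U p ⊓ F p := le_inf (inf_le_right.trans (hU (by omega))) inf_le_left
  have hp' : F p ⊓ U (p + 1) ≤ U (p + 1) ⊓ F (p + 1) :=
    le_inf inf_le_right (inf_le_left.trans (hF (by omega)))
  exact disjoint_iff.mpr <| disjoint_self.mp <| (hind.pairwiseDisjoint (by simp)).mono hp hp'

theorem codisjoint_of_iSup_inf_eq_top (hF : Monotone F) (hU : Antitone U)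
    (htop : ⨆ p, U p ⊓ F p = ⊤) (p : ℤ) : Codisjoint (F p) (U (p + 1)) := by
  rw [codisjoint_iff_le_sup, ← htop]
  refine iSup_le fun q => ?_
  rcases le_or_gt q p with hq | hq
  · exact le_sup_of_le_left (inf_le_right.trans (hF hq))
  · exact le_sup_of_le_right (inf_le_left.trans (hU hq))

variable [IsModularLattice α]

theorem iSupIndep_inf_of_disjoint (hF : Monotone F) (hU : Antitone U)
    (h : ∀ p, Disjoint (F p) (U (p + 1))) : iSupIndep fun p => U p ⊓ F p := by
  intro p
  have hothers : ⨆ q, ⨆ _ : q ≠ p, U q ⊓ F q ≤ F (p - 1) ⊔ U (p + 1) := by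
    refine iSup₂_le fun q hq => ?_
    rcases lt_or_gt_of_ne hq with hlt | hgt
    · exact le_sup_of_le_left (inf_le_right.trans (hF (by omega)))
    · exact le_sup_of_le_right (inf_le_left.trans (hU (by omega)))
  have hbelow : Disjoint (U p ⊓ F p) (F (p - 1)) := by
    simpa using (h (p - 1)).symm.mono_left (inf_le_left (b := F p))
  refine Disjoint.mono_right hothers (hbelow.disjoint_sup_right_of_disjoint_sup_left ?_)
  exact (h p).mono_left (sup_le inf_le_right (hF (by omega)))

theorem iSup_inf_eq_top_of_codisjoint (hF : Monotone F) (h : ∀ p, Codisjoint (F p) (U (p + 1)))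
    (hFbot : ∃ n, F n = ⊥) (hFtop : ∃ n, F n = ⊤) : ⨆ p, U p ⊓ F p = ⊤ := by
  obtain ⟨n₀, hn₀⟩ := hFbot
  obtain ⟨n₁, hn₁⟩ := hFtop
  have hle : ∀ n, n₀ ≤ n → F n ≤ ⨆ p, U p ⊓ F p := by
    intro n hn
    induction n, hn using Int.leInduction with
    | base => simp [hn₀]
    | succ n _ ih =>
      have hstep : F (n + 1) = F n ⊔ U (n + 1) ⊓ F (n + 1) := by
        rw [← sup_inf_assoc_of_le _ (hF (by omega)), (h n).eq_top, top_inf_eq]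
      rw [hstep]
      exact sup_le ih (le_iSup (fun p => U p ⊓ F p) (n + 1))
  exact top_unique <| hn₁ ▸ (hF (le_max_left n₁ n₀)).trans (hle _ (le_max_right n₁ n₀))

theorem iSupIndep_inf_and_iSup_eq_top_iff (hF : Monotone F) (hU : Antitone U)
    (hFbot : ∃ n, F n = ⊥) (hFtop : ∃ n, F n = ⊤) :
    (iSupIndep (fun p => U p ⊓ F p) ∧ ⨆ p, U p ⊓ F p = ⊤) ↔ ∀ p, IsCompl (F p) (U (p + 1)) :=
  ⟨fun ⟨hind, htop⟩ p =>
    ⟨disjoint_of_iSupIndep_inf hF hU hind p, codisjoint_of_iSup_inf_eq_top hF hU htop p⟩,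
   fun h => ⟨iSupIndep_inf_of_disjoint hF hU fun p => (h p).disjoint,
    iSup_inf_eq_top_of_codisjoint hF (fun p => (h p).codisjoint) hFbot hFtop⟩⟩

end

theorem opposite_iff_isCompl_general
    (H : Type*) [AddCommGroup H] [Module ℂ H]
    (F U : ℤ → Submodule ℂ H)
    (hF : Monotone F) (hFbot : ∃ n : ℤ, F n = ⊥) (hFtop : ∃ n : ℤ, F n = ⊤)
    (hU : Antitone U) :
    Function.Bijective
        (DirectSum.toModule ℂ ℤ H (fun p : ℤ => (U p ⊓ F p).subtype))
      ↔ ∀ p : ℤ, IsCompl (F p) (U (p + 1)) :=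
  (DirectSum.isInternal_submodule_iff_iSupIndep_and_iSup_eq_top _).trans
    (iSupIndep_inf_and_iSup_eq_top_iff hF hU hFbot hFtop)

/-- For a finite-dimensional complex vector space `H` with a finite increasing filtration `F`
and a finite decreasing filtration `U`, the sum map `⊕_p (U^p ∩ F_p) → H` is an isomorphism
iff `F_p H ⊕ U^{p+1} H = H` for every integer `p`. -/
theorem opposite_iff_isCompl
    (H : Type*) [AddCommGroup H] [Module ℂ H] [FiniteDimensional ℂ H]
    (F U : ℤ → Submodule ℂ H)
    (hF : Monotone F) (hFbot : ∃ n : ℤ, F n = ⊥) (hFtop : ∃ n : ℤ, F n = ⊤)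
    (hU : Antitone U) (hUtop : ∃ n : ℤ, U n = ⊤) (hUbot : ∃ n : ℤ, U n = ⊥) :
    Function.Bijective
        (DirectSum.toModule ℂ ℤ H (fun p : ℤ => (U p ⊓ F p).subtype))
      ↔ ∀ p : ℤ, IsCompl (F p) (U (p + 1)) :=
  opposite_iff_isCompl_general H F U hF hFbot hFtop hU
end

section
/- Define v^{[r]}_0 := e_0 + s_1 e_1 + Σ_{ν ≥ 0} Σ_{i=2}^r h_i^{(||ν||)}(s_1) (s^ν/ν!) ∂_t^{|ν|−||ν||} e_i, where h_i are formal power series, s^ν = ∏ s_j^{ν_j}, ν! = ∏ ν_j!, ||ν|| = Σ j ν_j, |ν| = Σ ν_j, and h^{(k)} is the k-th derivative. Then ∂_t^{-1} ∂_{s_j} v^{[r]}_0 = ∂_t^{-j} ∂_{s_1}^j v^{[r]}_0 for every j = 2,...,r. -/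
open Fin.NatCast

/-- Monomials in `s_1, …, s_r` (index `0` is unused). -/
abbrev Mon (r : ℕ) := Fin (r + 1) →₀ ℕ

/-- Elements of `G = ⊕_{i=0}^r ℂ[∂_t,∂_t⁻¹] ⊗ ℂ[[s_1,…,s_r]] e_i` (with `∂_t`-support
bounded below), described by their coefficients: the value at `((k, i), μ)` is the
coefficient of `s^μ ∂_t^{-k} e_i`. -/
abbrev SerG (r : ℕ) := (ℤ × Fin (r + 1)) → Mon r → ℂ

/-- `‖ν‖ = ∑_{j=2}^r j ν_j` for the multi-index `ν = (μ_2, …, μ_r)`. -/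
def wnorm (r : ℕ) (μ : Mon r) : ℕ := ∑ j ∈ Finset.Icc 2 r, j * μ (j : Fin (r + 1))

/-- `|ν| = ∑_{j=2}^r ν_j`. -/
def anorm (r : ℕ) (μ : Mon r) : ℕ := ∑ j ∈ Finset.Icc 2 r, μ (j : Fin (r + 1))

/-- `ν! = ∏_{j=2}^r ν_j!`. -/
def mfact (r : ℕ) (μ : Mon r) : ℕ := ∏ j ∈ Finset.Icc 2 r, (μ (j : Fin (r + 1))).factorial

/-- `∂_t⁻¹`. -/
def dtInvOp (r : ℕ) (x : SerG r) : SerG r := fun p => x (p.1 - 1, p.2)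

/-- `t`, acting by `t (∂_t^{-k} e_i) = (k+1) ∂_t^{-k-1} e_i`. -/
noncomputable def tOpF (r : ℕ) (x : SerG r) : SerG r :=
  fun p μ => (p.1 : ℂ) * x (p.1 - 1, p.2) μ

/-- `∂_{s_j}`, acting on the power series coefficients (`∂_{s_j} e_i = 0`). -/
noncomputable def DOp (r : ℕ) (j : Fin (r + 1)) (x : SerG r) : SerG r :=
  fun p μ => ((μ j : ℂ) + 1) * x p (μ + Finsupp.single j 1)

/-- Multiplication by `s_j`. -/
noncomputable def mulS (r : ℕ) (j : Fin (r + 1)) (x : SerG r) : SerG r :=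
  fun p μ => if μ j = 0 then 0 else x p (μ - Finsupp.single j 1)

/-- `v₀^{[r]} = e_0 + s_1 e_1 + ∑_{ν ≥ 0} ∑_{i=2}^r h_i^{(‖ν‖)}(s_1) (s^ν/ν!) ∂_t^{|ν|-‖ν‖} e_i`,
described coefficientwise: the monomial `s^μ` contributes to the `e_i`-component
(`2 ≤ i`) in the `∂_t`-slot `k = ‖ν‖ − |ν|` with `ν = (μ_2,…,μ_r)`, with coefficient
`(1/ν!) ·` (the `μ_1`-th coefficient of `h_i^{(‖ν‖)}`). -/
noncomputable def vr0 (r : ℕ) (h : ℕ → PowerSeries ℂ) : SerG r := fun p μ =>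
  (if p = ((0 : ℤ), (0 : Fin (r + 1))) ∧ μ = 0 then 1 else 0)
  + (if p = ((0 : ℤ), (1 : Fin (r + 1))) ∧ μ = Finsupp.single (1 : Fin (r + 1)) 1 then 1 else 0)
  + (if 2 ≤ (p.2 : ℕ) ∧ μ (0 : Fin (r + 1)) = 0
        ∧ p.1 = ((wnorm r μ : ℤ) - (anorm r μ : ℤ)) then
      ((mfact r μ : ℂ))⁻¹
        * PowerSeries.coeff (R := ℂ) (μ (1 : Fin (r + 1)))
            ((PowerSeries.derivativeFun)^[wnorm r μ] (h (p.2 : ℕ)))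
    else 0)

/-!
Both sides vanish on `e_0 + s_1 e_1`, since `j ≥ 2`. On the remaining terms, `∂_{s_j}` sends
`s^{ν + 1_j} / (ν + 1_j)!` to `s^ν / ν!`, and the reindexing `ν ↦ ν + 1_j` raises `‖ν‖` by `j` and
`|ν|` by `1`: the coefficient of `s^ν e_i` in `∂_t⁻¹ ∂_{s_j} v₀` is `h_i^{(‖ν‖ + j)}(s_1) / ν!` in
the `∂_t`-slot `‖ν‖ - |ν| + j`. Differentiating `h_i^{(‖ν‖)}(s_1)` `j` times in `s_1` and shifting
by `∂_t^{-j}` gives the same coefficient.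
-/

theorem PowerSeries.coeff_iterate_derivativeFun {R : Type*} [CommSemiring R]
    (f : PowerSeries R) (n k : ℕ) :
    PowerSeries.coeff k (PowerSeries.derivativeFun^[n] f)
      = (k + 1).ascFactorial n * PowerSeries.coeff (k + n) f :=
  PowerSeries.coeff_iterate_derivative f n k

theorem Fin.natCast_inj_of_lt {n a b : ℕ} [NeZero n] (ha : a < n) (hb : b < n) :
    (a : Fin n) = b ↔ a = b := by
  refine ⟨fun hab => ?_, congrArg _⟩
  simpa [Fin.val_cast_of_lt ha, Fin.val_cast_of_lt hb] using congrArg Fin.val hab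

section Operators

variable {r : ℕ}

theorem dtInvOp_iterate_apply (x : SerG r) (n : ℕ) (k : ℤ) (i : Fin (r + 1)) :
    (dtInvOp r)^[n] x (k, i) = x (k - n, i) := by
  induction n generalizing x with
  | zero => simp
  | succ n ih =>
    rw [Function.iterate_succ_apply, ih, dtInvOp]
    congr 2
    push_cast
    ring

theorem DOp_iterate_apply (i : Fin (r + 1)) (x : SerG r) (n : ℕ) (p : ℤ × Fin (r + 1))
    (μ : Mon r) :
    (DOp r i)^[n] x p μ = (μ i + 1).ascFactorial n * x p (μ + Finsupp.single i n) := by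
  induction n generalizing x with
  | zero => simp
  | succ n ih =>
    rw [Function.iterate_succ_apply, ih, DOp, Nat.ascFactorial_succ, add_assoc,
      ← Finsupp.single_add]
    simp only [Finsupp.add_apply, Finsupp.single_eq_same]
    push_cast
    ring

end Operators

section Multiindex

variable {r : ℕ}

theorem natCast_ne_of_mem_Icc {a b : ℕ} (ha : a ∈ Finset.Icc 2 r) (hb : b < 2) :
    (a : Fin (r + 1)) ≠ b := by
  rw [Finset.mem_Icc] at ha
  intro hab
  have := (Fin.natCast_inj_of_lt (show a < r + 1 by omega) (show b < r + 1 by omega)).1 hab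
  omega

theorem add_single_one_apply_of_mem_Icc (μ : Mon r) (n : ℕ) {a : ℕ}
    (ha : a ∈ Finset.Icc 2 r) : (μ + Finsupp.single 1 n : Mon r) a = μ a := by
  have ha1 : (a : Fin (r + 1)) ≠ 1 := by exact_mod_cast natCast_ne_of_mem_Icc ha one_lt_two
  rw [Finsupp.add_apply, Finsupp.single_eq_of_ne ha1, add_zero]

theorem add_single_apply_of_mem_Icc (μ : Mon r) {a j : ℕ} (ha : a ∈ Finset.Icc 2 r)
    (hj : j ∈ Finset.Icc 2 r) :
    (μ + Finsupp.single (j : Fin (r + 1)) 1 : Mon r) a = μ a + if a = j then 1 else 0 := by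
  rw [Finset.mem_Icc] at ha hj
  simp only [Finsupp.add_apply, Finsupp.single_apply, Fin.natCast_inj_of_lt
    (show j < r + 1 by omega) (show a < r + 1 by omega), eq_comm]

theorem wnorm_add_single_one (μ : Mon r) (n : ℕ) :
    wnorm r (μ + Finsupp.single 1 n) = wnorm r μ :=
  Finset.sum_congr rfl fun _ ha => by rw [add_single_one_apply_of_mem_Icc μ n ha]

theorem anorm_add_single_one (μ : Mon r) (n : ℕ) :
    anorm r (μ + Finsupp.single 1 n) = anorm r μ :=
  Finset.sum_congr rfl fun _ ha => by rw [add_single_one_apply_of_mem_Icc μ n ha]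

theorem mfact_add_single_one (μ : Mon r) (n : ℕ) :
    mfact r (μ + Finsupp.single 1 n) = mfact r μ :=
  Finset.prod_congr rfl fun _ ha => by rw [add_single_one_apply_of_mem_Icc μ n ha]

theorem wnorm_add_single (μ : Mon r) {j : ℕ} (hj : j ∈ Finset.Icc 2 r) :
    wnorm r (μ + Finsupp.single (j : Fin (r + 1)) 1) = wnorm r μ + j := by
  rw [wnorm, Finset.sum_congr rfl fun _ ha => by rw [add_single_apply_of_mem_Icc μ ha hj]]
  simp only [mul_add, mul_ite, mul_one, mul_zero, Finset.sum_add_distrib, Finset.sum_ite_eq', hj,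
    if_true, wnorm]

theorem anorm_add_single (μ : Mon r) {j : ℕ} (hj : j ∈ Finset.Icc 2 r) :
    anorm r (μ + Finsupp.single (j : Fin (r + 1)) 1) = anorm r μ + 1 := by
  rw [anorm, Finset.sum_congr rfl fun _ ha => by rw [add_single_apply_of_mem_Icc μ ha hj]]
  simp only [Finset.sum_add_distrib, Finset.sum_ite_eq', hj, if_true, anorm]

theorem mfact_add_single (μ : Mon r) {j : ℕ} (hj : j ∈ Finset.Icc 2 r) :
    mfact r (μ + Finsupp.single (j : Fin (r + 1)) 1) = mfact r μ * (μ j + 1) := by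
  have hfact : ∀ a ∈ Finset.Icc 2 r,
      ((μ + Finsupp.single (j : Fin (r + 1)) 1 : Mon r) a).factorial
        = (μ a).factorial * if a = j then μ j + 1 else 1 := by
    intro a ha
    rw [add_single_apply_of_mem_Icc μ ha hj]
    split_ifs with haj
    · rw [haj, Nat.factorial_succ, mul_comm]
    · simp
  rw [mfact, Finset.prod_congr rfl hfact]
  simp only [Finset.prod_mul_distrib, Finset.prod_ite_eq', hj, if_true, mfact]

end Multiindex

section Vr0

variable {r : ℕ} (h : ℕ → PowerSeries ℂ)

theorem vr0_apply_of_ne {p : ℤ × Fin (r + 1)} {μ : Mon r} (h0 : μ ≠ 0)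
    (h1 : μ ≠ Finsupp.single 1 1) :
    vr0 r h p μ = if 2 ≤ (p.2 : ℕ) ∧ μ 0 = 0 ∧ p.1 = (wnorm r μ : ℤ) - anorm r μ then
      (mfact r μ : ℂ)⁻¹ *
        PowerSeries.coeff (μ 1) (PowerSeries.derivativeFun^[wnorm r μ] (h p.2))
    else 0 := by
  simp [vr0, h0, h1]

theorem vr0_add_single {j : ℕ} (hj : j ∈ Finset.Icc 2 r) (k : ℤ) (i : Fin (r + 1))
    (μ : Mon r) :
    vr0 r h (k, i) (μ + Finsupp.single (j : Fin (r + 1)) 1) =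
      if 2 ≤ (i : ℕ) ∧ μ 0 = 0 ∧
          k = ((wnorm r μ + j : ℕ) : ℤ) - (anorm r μ + 1 : ℕ) then
        ((mfact r μ * (μ j + 1) : ℕ) : ℂ)⁻¹ *
          PowerSeries.coeff (μ 1) (PowerSeries.derivativeFun^[wnorm r μ + j] (h i))
      else 0 := by
  have hj0 : (j : Fin (r + 1)) ≠ 0 := by exact_mod_cast natCast_ne_of_mem_Icc hj two_pos
  have hj1 : (j : Fin (r + 1)) ≠ 1 := by exact_mod_cast natCast_ne_of_mem_Icc hj one_lt_two
  have hjj : (μ + Finsupp.single (j : Fin (r + 1)) 1 : Mon r) j ≠ 0 := by simp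
  rw [vr0_apply_of_ne h (fun h0 => hjj (by simp [h0]))
    (fun h1 => hjj (by simp [h1, Finsupp.single_eq_of_ne hj1]))]
  simp [wnorm_add_single μ hj, anorm_add_single μ hj, mfact_add_single μ hj,
    Finsupp.single_eq_of_ne' hj0, Finsupp.single_eq_of_ne' hj1]

theorem vr0_add_single_one (hr : 0 < r) {n : ℕ} (hn : 2 ≤ n) (k : ℤ) (i : Fin (r + 1))
    (μ : Mon r) :
    vr0 r h (k, i) (μ + Finsupp.single 1 n) =
      if 2 ≤ (i : ℕ) ∧ μ 0 = 0 ∧ k = (wnorm r μ : ℤ) - anorm r μ then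
        (mfact r μ : ℂ)⁻¹ *
          PowerSeries.coeff (μ 1 + n) (PowerSeries.derivativeFun^[wnorm r μ] (h i))
      else 0 := by
  have h10 : (1 : Fin (r + 1)) ≠ 0 := by
    rw [Ne, Fin.one_eq_zero_iff]
    omega
  have hμ1 : (μ + Finsupp.single 1 n : Mon r) 1 = μ 1 + n := by simp
  rw [vr0_apply_of_ne h (fun h0 => by rw [h0, Finsupp.coe_zero, Pi.zero_apply] at hμ1; omega)
    (fun h1 => by rw [h1, Finsupp.single_eq_same] at hμ1; omega)]
  simp [wnorm_add_single_one, anorm_add_single_one, mfact_add_single_one, hμ1,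
    Finsupp.single_eq_of_ne' h10]

end Vr0

theorem dtinv_dsj_vr0_general (r : ℕ) (h : ℕ → PowerSeries ℂ)
    (j : ℕ) (hj2 : 2 ≤ j) (hjr : j ≤ r) :
    dtInvOp r (DOp r (j : Fin (r + 1)) (vr0 r h))
      = (dtInvOp r)^[j] ((DOp r (1 : Fin (r + 1)))^[j] (vr0 r h)) := by
  have hj : j ∈ Finset.Icc 2 r := Finset.mem_Icc.2 ⟨hj2, hjr⟩
  funext ⟨k, i⟩ μ
  rw [dtInvOp, DOp, dtInvOp_iterate_apply, DOp_iterate_apply, vr0_add_single h hj,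
    vr0_add_single_one h (by omega) hj2]
  have hk : k - 1 = ((wnorm r μ + j : ℕ) : ℤ) - (anorm r μ + 1 : ℕ) ↔
      k - j = (wnorm r μ : ℤ) - anorm r μ := by
    push_cast
    omega
  simp only [hk]
  split_ifs
  · rw [add_comm (wnorm r μ) j, Function.iterate_add_apply,
      PowerSeries.coeff_iterate_derivativeFun]
    push_cast
    field_simp
  · simp

/-- `∂_t⁻¹ ∂_{s_j} v₀^{[r]} = ∂_t^{-j} ∂_{s_1}^j v₀^{[r]}` for `j = 2, …, r`. -/
theorem dtinv_dsj_vr0 (r : ℕ) (hr : 2 ≤ r) (h : ℕ → PowerSeries ℂ)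
    (j : ℕ) (hj2 : 2 ≤ j) (hjr : j ≤ r) :
    dtInvOp r (DOp r (j : Fin (r + 1)) (vr0 r h))
      = (dtInvOp r)^[j] ((DOp r (1 : Fin (r + 1)))^[j] (vr0 r h)) :=
  dtinv_dsj_vr0_general r h j hj2 hjr
end

section
/- With v^{[r]}_0 as above, (t − ∂_t^{-1}) v^{[r]}_0 = Σ_{j=2}^r (j−1) s_j ∂_t^{-1} ∂_{s_j} v^{[r]}_0, where t acts by t(∂_t^{-k}e_i) = (k+1)∂_t^{-k-1}e_i (so that t − ∂_t^{-1} acts on the coefficient of ∂_t^{-k}e_i as k∂_t^{-1}). -/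
open Fin.NatCast

/-! Both sides act diagonally on coefficients: `t − ∂_t⁻¹` multiplies the coefficient of
`∂_t^{-k}` by `k ∂_t⁻¹`, and the Euler operator `s_j ∂_{s_j}` multiplies that of `s^μ` by `μ_j`.
The identity therefore says that `v₀^{[r]}` is homogeneous: every monomial `s^μ ∂_t^{-k} e_i`
occurring in it has `k = ‖ν‖ − |ν| = ∑_{j ≥ 2} (j − 1) μ_j`. -/

theorem single_one_apply_of_mem_Icc {r j : ℕ} (hj : j ∈ Finset.Icc 2 r) :
    (Finsupp.single (1 : Fin (r + 1)) 1 : Mon r) (j : Fin (r + 1)) = 0 := by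
  obtain ⟨hj2, hjr⟩ := Finset.mem_Icc.mp hj
  refine Finsupp.single_eq_of_ne' fun hj1 => ?_
  have := congrArg Fin.val hj1
  rw [Fin.val_cast_of_lt (by omega), Fin.val_one', Nat.mod_eq_of_lt (by omega)] at this
  omega

theorem wnorm_single_one (r : ℕ) : wnorm r (Finsupp.single 1 1) = 0 :=
  Finset.sum_eq_zero fun _ hj => by rw [single_one_apply_of_mem_Icc hj, mul_zero]

theorem anorm_single_one (r : ℕ) : anorm r (Finsupp.single 1 1) = 0 :=
  Finset.sum_eq_zero fun _ hj => single_one_apply_of_mem_Icc hj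

theorem wnorm_sub_anorm (r : ℕ) (μ : Mon r) :
    (wnorm r μ : ℂ) - anorm r μ = ∑ j ∈ Finset.Icc 2 r, ((j : ℂ) - 1) * μ (j : Fin (r + 1)) := by
  push_cast [wnorm, anorm]
  rw [← Finset.sum_sub_distrib]
  exact Finset.sum_congr rfl fun _ _ => by ring

theorem vr0_apply_eq_zero_of_ne (r : ℕ) (h : ℕ → PowerSeries ℂ) (q : ℤ × Fin (r + 1))
    (μ : Mon r) (hq : q.1 ≠ (wnorm r μ : ℤ) - anorm r μ) : vr0 r h q μ = 0 := by
  have he₀ : ¬(q = (0, 0) ∧ μ = 0) := by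
    rintro ⟨rfl, rfl⟩
    simp [wnorm, anorm] at hq
  have he₁ : ¬(q = (0, 1) ∧ μ = Finsupp.single 1 1) := by
    rintro ⟨rfl, rfl⟩
    simp [wnorm_single_one, anorm_single_one] at hq
  simp only [vr0, if_neg he₀, if_neg he₁, hq, and_false, if_false, add_zero]

theorem fst_mul_vr0_apply (r : ℕ) (h : ℕ → PowerSeries ℂ) (q : ℤ × Fin (r + 1)) (μ : Mon r) :
    (q.1 : ℂ) * vr0 r h q μ
      = (∑ j ∈ Finset.Icc 2 r, ((j : ℂ) - 1) * μ (j : Fin (r + 1))) * vr0 r h q μ := by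
  rw [← wnorm_sub_anorm]
  by_cases hq : q.1 = (wnorm r μ : ℤ) - anorm r μ
  · rw [hq, Int.cast_sub, Int.cast_natCast, Int.cast_natCast]
  · rw [vr0_apply_eq_zero_of_ne r h q μ hq, mul_zero, mul_zero]

section Operators

variable {r : ℕ}

theorem mulS_dtInvOp (j : Fin (r + 1)) (x : SerG r) :
    mulS r j (dtInvOp r x) = dtInvOp r (mulS r j x) := rfl

theorem mulS_DOp_apply (j : Fin (r + 1)) (x : SerG r) (p : ℤ × Fin (r + 1)) (μ : Mon r) :
    mulS r j (DOp r j x) p μ = μ j * x p μ := by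
  unfold mulS DOp
  split_ifs with hj
  · simp [hj]
  · have hμ : μ - Finsupp.single j 1 + Finsupp.single j 1 = μ :=
      tsub_add_cancel_of_le (Finsupp.single_le_iff.mpr (Nat.one_le_iff_ne_zero.mpr hj))
    rw [hμ, Finsupp.tsub_apply, Finsupp.single_eq_same,
      Nat.cast_sub (Nat.one_le_iff_ne_zero.mpr hj), Nat.cast_one, sub_add_cancel]

theorem tOpF_sub_dtInvOp_apply (x : SerG r) (p : ℤ × Fin (r + 1)) (μ : Mon r) :
    (tOpF r x - dtInvOp r x) p μ = ((p.1 - 1 : ℤ) : ℂ) * dtInvOp r x p μ := by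
  simp only [Pi.sub_apply, tOpF, dtInvOp]
  push_cast
  ring

end Operators

theorem t_sub_dtinv_vr0_general (r : ℕ) (h : ℕ → PowerSeries ℂ) :
    tOpF r (vr0 r h) - dtInvOp r (vr0 r h)
      = ∑ j ∈ Finset.Icc 2 r,
          ((j : ℂ) - 1) • mulS r (j : Fin (r + 1))
            (dtInvOp r (DOp r (j : Fin (r + 1)) (vr0 r h))) := by
  funext p μ
  rw [tOpF_sub_dtInvOp_apply]
  simp only [Finset.sum_apply, Pi.smul_apply, smul_eq_mul, mulS_dtInvOp]
  simp only [dtInvOp, mulS_DOp_apply, ← mul_assoc, ← Finset.sum_mul]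
  exact fst_mul_vr0_apply r h (p.1 - 1, p.2) μ

/-- `(t − ∂_t⁻¹) v₀^{[r]} = ∑_{j=2}^r (j−1) s_j ∂_t⁻¹ ∂_{s_j} v₀^{[r]}`. -/
theorem t_sub_dtinv_vr0 (r : ℕ) (hr : 2 ≤ r) (h : ℕ → PowerSeries ℂ) :
    tOpF r (vr0 r h) - dtInvOp r (vr0 r h)
      = ∑ j ∈ Finset.Icc 2 r,
          ((j : ℂ) - 1) • mulS r (j : Fin (r + 1))
            (dtInvOp r (DOp r (j : Fin (r + 1)) (vr0 r h))) :=
  t_sub_dtinv_vr0_general r h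
end

section
/- Let Γ act on pairs: given (alpha, beta, gamma) ∈ C^3 and h ∈ C[[s_1]] with h(0)=h'(0)=0, define g_1 = (s_1 + γh(s_1))/(1 + αs_1 + βh(s_1)) and g~ = h(s_1)/(1 + αs_1 + βh(s_1)) (well-defined formal power series since the denominator has constant term 1). Then applying a second triple (α',β',γ') to the resulting configuration and clearing denominators yields the configuration associated to the triple (α+α', β+β'+γα', γ+γ'); i.e., the assignment is a (contravariant) action of the group of unipotent lower-triangular 3×3 matrices. -/
open PowerSeries

theorem PowerSeries.constantCoeff_one_add_C_mul_X_add_C_mul {R : Type*} [CommSemiring R]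
    (α β : R) (h : R⟦X⟧) :
    constantCoeff (1 + C α * X + C β * h) = 1 + β * constantCoeff h := by
  simp

theorem gamma_action_contravariant_general
    (α β γ α' β' γ' : ℂ) (h : PowerSeries ℂ)
    (h0 : PowerSeries.coeff 0 h = 0) :
    letI d : PowerSeries ℂ := 1 + PowerSeries.C α * PowerSeries.X + PowerSeries.C β * h
    letI g₁ : PowerSeries ℂ := d⁻¹ * (PowerSeries.X + PowerSeries.C γ * h)
    letI gt : PowerSeries ℂ := d⁻¹ * h
    d * (1 + PowerSeries.C α' * g₁ + PowerSeries.C β' * gt)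
        = 1 + PowerSeries.C (α + α') * PowerSeries.X + PowerSeries.C (β + β' + γ * α') * h
      ∧ d * (g₁ + PowerSeries.C γ' * gt) = PowerSeries.X + PowerSeries.C (γ + γ') * h
      ∧ d * gt = h := by
  set d : ℂ⟦X⟧ := 1 + C α * X + C β * h
  have hd : d * d⁻¹ = 1 := by
    refine PowerSeries.mul_inv_cancel d ?_
    rw [constantCoeff_one_add_C_mul_X_add_C_mul, ← coeff_zero_eq_constantCoeff_apply, h0]
    simp
  simp only [map_add, map_mul]
  refine ⟨?_, ?_, ?_⟩
  · linear_combination (C α' * (X + C γ * h) + C β' * h) * hd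
  · linear_combination (X + C γ * h + C γ' * h) * hd
  · linear_combination h * hd

/-- Contravariance of the `Γ`-action on configurations `(1, s + γh, h)`:
applying `(α',β',γ')` to the normalized configuration obtained from `(α,β,γ)` and clearing
the denominator `d = 1 + αs + βh` yields the configuration of the product triple
`(α+α', β+β'+γα', γ+γ')`. -/
theorem gamma_action_contravariant
    (α β γ α' β' γ' : ℂ) (h : PowerSeries ℂ)
    (h0 : PowerSeries.coeff 0 h = 0) (h1 : PowerSeries.coeff 1 h = 0) :
    letI d : PowerSeries ℂ := 1 + PowerSeries.C α * PowerSeries.X + PowerSeries.C β * h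
    letI g₁ : PowerSeries ℂ := d⁻¹ * (PowerSeries.X + PowerSeries.C γ * h)
    letI gt : PowerSeries ℂ := d⁻¹ * h
    d * (1 + PowerSeries.C α' * g₁ + PowerSeries.C β' * gt)
        = 1 + PowerSeries.C (α + α') * PowerSeries.X + PowerSeries.C (β + β' + γ * α') * h
      ∧ d * (g₁ + PowerSeries.C γ' * gt) = PowerSeries.X + PowerSeries.C (γ + γ') * h
      ∧ d * gt = h :=
  gamma_action_contravariant_general α β γ α' β' γ' h h0
end
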